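/- Let L be a locally small category with hom-sets in Type u, together with a distinguished object X, such that for every type I : Type u the I-fold power X^I of X exists in L and every object of L is isomorphic to such a power. Let Mod(L) be the full subcategory of the functor category L ⥤ Type u consisting of the functors preserving all small products. Then the evaluation functor Mod(L) → Type u, M ↦ M(X), is monadic: it has a left adjoint, and the comparison functor from Mod(L) to the Eilenberg–Moore category of algebras for the induced monad on Type u is an equivalence of categories. -/

import Mathlib

/-!
STATEMENT 16: For an infinitary Lawvere theory `(L, X)`, the evaluation functor
`Mod(L) ⥤ Type u`, `M ↦ M(X)`, is monadic: it has a left adjoint and the comparison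
functor to the Eilenberg–Moore category of the induced monad on `Type u` is an
equivalence.
-/

open CategoryTheory CategoryTheory.Limits

universe u v

/-- The category of models of an infinitary Lawvere theory: the full subcategory of
`L ⥤ Type u` on the functors preserving all small products. -/
abbrev LawvereModel (L : Type v) [Category.{u} L] : Type (max v (u + 1)) :=
  ObjectProperty.FullSubcategory (C := L ⥤ Type u) fun M : L ⥤ Type u =>
    ∀ I : Type u, Nonempty (PreservesLimitsOfShape (Discrete I) M)

/-- Evaluation of models at the distinguished object `X`. -/
def evalModel (L : Type v) [Category.{u} L] (X : L) : LawvereModel L ⥤ Type u :=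
  ObjectProperty.ι _ ⋙ (evaluation L (Type u)).obj X

/-!
The left adjoint of evaluation at `X` sends `I` to the corepresentable model `Hom(X^I, -)`, by
Yoneda and `M(X^I) ≅ M(X)^I`. Evaluation reflects isomorphisms since every object is a power of
`X`, so by Beck's theorem it remains to lift coequalizers of pairs `f, g : M ⇉ N` that are split
at `X`. Take the pointwise coequalizer `q : N ⟶ Q`. The section `t` of `g` at `X` from the
splitting, which satisfies `f t f = f t g`, transports along `A ≅ X^J` to such a section at every
`A`, and then `q n = q n' ↔ f (t n) = f (t n')`. This description of the kernel of `q` is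
compatible with products, so `Q` again preserves them.
-/

universe v₁ v₂ v₃ u₁ u₂ u₃

namespace CategoryTheory.Monad

section InverseComp

variable {C : Type u₁} {D : Type u₂} {D' : Type u₃}
  [Category.{v₁} C] [Category.{v₂} D] [Category.{v₃} D']
  (e : D ≌ D') {F : C ⥤ D'} {G : D ⥤ C} (adj : F ⊣ e.inverse ⋙ G)

noncomputable def adjunctionOfInverseComp : F ⋙ e.inverse ⊣ G :=
  (adj.comp e.symm.toAdjunction).ofNatIsoRight (Functor.isoWhiskerRight e.unitIso.symm G)

theorem adjunctionOfInverseComp_unit_app (x : C) :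
    (adjunctionOfInverseComp e adj).unit.app x = adj.unit.app x := by
  simp [adjunctionOfInverseComp, ← G.map_comp]

theorem adjunctionOfInverseComp_counit_app (B : D) :
    (adjunctionOfInverseComp e adj).counit.app B =
      e.inverse.map (F.map (G.map (e.unit.app B)) ≫ adj.counit.app (e.functor.obj B)) ≫
        e.unitInv.app B := by
  simp [adjunctionOfInverseComp]

theorem adjunctionOfInverseComp_counit_app_inverse (Y : D') :
    (adjunctionOfInverseComp e adj).counit.app (e.inverse.obj Y) =
      e.inverse.map (adj.counit.app Y) := by
  rw [adjunctionOfInverseComp_counit_app, e.unit_app_inverse, e.unitInv_app_inverse,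
    ← e.inverse.map_comp, Category.assoc]
  congr 1
  exact (adj.counit_naturality_assoc (e.counitInv.app Y) _).trans (by simp)

noncomputable def toMonadIsoOfInverseComp :
    (adjunctionOfInverseComp e adj).toMonad ≅ adj.toMonad :=
  MonadIso.mk (Iso.refl _)
    (fun x => by simpa [Adjunction.toMonad] using adjunctionOfInverseComp_unit_app e adj x)
    (fun x => by
      simpa [Adjunction.toMonad] using
        congrArg G.map (adjunctionOfInverseComp_counit_app_inverse e adj _))

noncomputable def comparisonIsoOfInverseComp :
    comparison (adjunctionOfInverseComp e adj) ≅
      e.functor ⋙ comparison adj ⋙ algebraFunctorOfMonadHom (toMonadIsoOfInverseComp e adj).hom :=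
  NatIso.ofComponents
    (fun B => Algebra.isoMk (G.mapIso (e.unitIso.app B)) (by
      change G.map (e.inverse.map (F.map (G.map (e.unit.app B)))) ≫ 𝟙 _ ≫
          G.map (e.inverse.map (adj.counit.app (e.functor.obj B))) =
        G.map ((adjunctionOfInverseComp e adj).counit.app B) ≫ G.map (e.unit.app B)
      simp [adjunctionOfInverseComp_counit_app]))
    (fun f => by
      ext
      change G.map f ≫ G.map (e.unit.app _) =
        G.map (e.unit.app _) ≫ G.map (e.inverse.map (e.functor.map f))
      rw [← G.map_comp, ← G.map_comp]
      exact congrArg G.map (e.unit.naturality f))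

noncomputable abbrev monadicOfInverseComp [MonadicRightAdjoint (e.inverse ⋙ G)] :
    MonadicRightAdjoint G where
  L := monadicLeftAdjoint (e.inverse ⋙ G) ⋙ e.inverse
  adj := adjunctionOfInverseComp e (monadicAdjunction _)
  eqv :=
    have : (algebraFunctorOfMonadHom
        (toMonadIsoOfInverseComp e (monadicAdjunction (e.inverse ⋙ G))).hom).IsEquivalence :=
      (algebraEquivOfIsoMonads _).isEquivalence_inverse
    Functor.isEquivalence_of_iso (comparisonIsoOfInverseComp e _).symm

end InverseComp

/-- `monadicOfCreatesGSplitCoequalizers` asks the homs of `D` and `C` to live in the same universe;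
here `D` is first replaced by `ShrinkHoms D`. -/
noncomputable abbrev monadicOfCreatesGSplitCoequalizersOfLocallySmall {C : Type u₁} {D : Type u₂}
    [Category.{v₁} C] [Category.{v₂} D] [LocallySmall.{v₁} D] {F : C ⥤ D} {G : D ⥤ C}
    (adj : F ⊣ G)
    (hG : ∀ ⦃A B : D⦄ (f g : A ⟶ B) [G.IsSplitPair f g], CreatesColimit (parallelPair f g) G) :
    MonadicRightAdjoint G :=
  let e := ShrinkHoms.equivalence.{v₁} D
  have : CreatesColimitOfIsSplitPair (e.inverse ⋙ G) := ⟨fun f g _ => by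
    have : G.IsSplitPair (e.inverse.map f) (e.inverse.map g) := ‹(e.inverse ⋙ G).IsSplitPair f g›
    have := hG (e.inverse.map f) (e.inverse.map g)
    have : CreatesColimit (parallelPair f g ⋙ e.inverse) G :=
      createsColimitOfIsoDiagram (K₁ := parallelPair (e.inverse.map f) (e.inverse.map g)) G
        (diagramIsoParallelPair (parallelPair f g ⋙ e.inverse)).symm
    exact compCreatesColimit _ _⟩
  have := monadicOfCreatesGSplitCoequalizers (adj.comp e.toAdjunction)
  monadicOfInverseComp e (G := G)

end CategoryTheory.Monad

namespace CategoryTheory.Limits.Types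

theorem nonempty_isLimit_discrete_iff_bijective {I : Type u} {F : Discrete I ⥤ Type u}
    (c : Cone F) :
    Nonempty (IsLimit c) ↔ Function.Bijective fun (x : c.pt) (i : I) => c.π.app ⟨i⟩ x := by
  let e : F.sections ≃ ∀ i, F.obj ⟨i⟩ :=
    { toFun s i := s.1 ⟨i⟩
      invFun x := ⟨fun j => x j.as, by
        rintro ⟨i⟩ _ f
        obtain rfl := Discrete.eq_of_hom f
        simp [Subsingleton.elim f (𝟙 _)]⟩
      left_inv _ := rfl
      right_inv _ := rfl }
  rw [isLimit_iff_bijective_sectionOfCone, ← Equiv.comp_bijective _ e]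
  rfl

theorem surjective_ι_app_one_of_isColimit {K : WalkingParallelPair ⥤ Type u} {c : Cocone K}
    (hc : IsColimit c) : Function.Surjective (c.ι.app .one) := by
  intro x
  obtain ⟨j, y, rfl⟩ := jointly_surjective _ hc x
  cases j with
  | zero => exact ⟨K.map .left y, ConcreteCategory.congr_hom (c.w .left) y⟩
  | one => exact ⟨y, rfl⟩

end CategoryTheory.Limits.Types

/-- What survives of a split coequalizer `(π, s, t)` of `f, g` when `π` and `s` are forgotten:
`f ∘ t = s ∘ π` makes `f ∘ t` coequalize `f` and `g`. Unlike `π` and `s`, such a `t` can be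
built componentwise on a product. -/
structure IsPairSplitting {α β : Type*} (f g : α → β) (t : β → α) : Prop where
  rightInverse : Function.RightInverse t g
  coequalizes : ∀ a, f (t (f a)) = f (t (g a))

namespace IsPairSplitting

theorem of_isSplitCoequalizer {α β γ : Type u} {f g : α ⟶ β} {π : β ⟶ γ}
    (s : IsSplitCoequalizer f g π) : IsPairSplitting f g s.leftSection where
  rightInverse b := ConcreteCategory.congr_hom s.leftSection_bottom b
  coequalizes a := by
    have top := ConcreteCategory.congr_hom s.leftSection_top
    have cond := ConcreteCategory.congr_hom s.condition a
    simp only [ConcreteCategory.comp_apply] at top cond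
    rw [top, top, cond]

theorem ι_app_one_eq_iff {K : WalkingParallelPair ⥤ Type u} {c : Cocone K} (hc : IsColimit c)
    {t : K.obj .one → K.obj .zero} (ht : IsPairSplitting (K.map .left) (K.map .right) t)
    (b b' : K.obj .one) :
    c.ι.app .one b = c.ι.app .one b' ↔ K.map .left (t b) = K.map .left (t b') := by
  constructor
  · intro h
    let s : Cocone K := (Cocone.precompose (diagramIsoParallelPair K).hom).obj
      (Cofork.ofπ (TypeCat.ofHom fun b => K.map .left (t b)) (by ext a; exact ht.coequalizes a))
    have hdesc : ∀ b, hc.desc s (c.ι.app .one b) = K.map .left (t b) := fun b =>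
      ConcreteCategory.congr_hom (hc.fac s .one) b
    rw [← hdesc b, ← hdesc b', h]
  · intro h
    have hπ : ∀ b, c.ι.app .one b = c.ι.app .one (K.map .left (t b)) := fun b => by
      conv_lhs => rw [← ht.rightInverse b]
      exact (ConcreteCategory.congr_hom (c.w .right) _).trans
        (ConcreteCategory.congr_hom (c.w .left) _).symm
    rw [hπ b, hπ b', h]

end IsPairSplitting

abbrev IsLawvereModel {L : Type v} [Category.{u} L] (M : L ⥤ Type u) : Prop :=
  ∀ I : Type u, Nonempty (PreservesLimitsOfShape (Discrete I) M)

namespace IsLawvereModel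

variable {L : Type v} [Category.{u} L] {M : L ⥤ Type u}

theorem bijective_map_π (hM : IsLawvereModel M) {I : Type u} {D : Discrete I ⥤ L} {c : Cone D}
    (hc : IsLimit c) : Function.Bijective fun (x : M.obj c.pt) (i : I) => M.map (c.π.app ⟨i⟩) x :=
  have := (hM I).some
  (Types.nonempty_isLimit_discrete_iff_bijective (M.mapCone c)).1 ⟨isLimitOfPreserves M hc⟩

theorem of_bijective_map_π
    (h : ∀ (I : Type u) (D : Discrete I ⥤ L) (c : Cone D), IsLimit c →
      Function.Bijective fun (x : M.obj c.pt) (i : I) => M.map (c.π.app ⟨i⟩) x) :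
    IsLawvereModel M := fun I =>
  ⟨⟨fun {D} => ⟨fun {c} hc =>
    (Types.nonempty_isLimit_discrete_iff_bijective (M.mapCone c)).2 (h I D c hc)⟩⟩⟩

end IsLawvereModel

section LawvereModels

variable {L : Type v} [Category.{u} L]

def IsPowerGenerator (X : L) : Prop :=
  ∀ A : L, ∃ (J : Type u) (p : J → (A ⟶ X)), Nonempty (IsLimit (Fan.mk A p))

theorem isPowerGenerator_of_iso_pi (X : L) (hpow : ∀ I : Type u, HasProduct fun _ : I => X)
    (hgen : ∀ A : L, ∃ I : Type u, letI := hpow I; Nonempty (A ≅ ∏ᶜ fun _ : I => X)) :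
    IsPowerGenerator X := fun A => by
  obtain ⟨J, ⟨e⟩⟩ := hgen A
  let := hpow J
  exact ⟨J, fun j => e.hom ≫ Pi.π _ j,
    ⟨IsLimit.ofIsoLimit (limit.isLimit _) (Cone.ext e.symm (by rintro ⟨j⟩; simp))⟩⟩

section Splitting

variable {M N : L ⥤ Type u}

theorem exists_isPairSplitting_of_isLimit (hM : IsLawvereModel M) (hN : IsLawvereModel N)
    (f g : M ⟶ N) {I : Type u} {D : Discrete I ⥤ L} {c : Cone D} (hc : IsLimit c)
    (t : ∀ i, N.obj (D.obj ⟨i⟩) → M.obj (D.obj ⟨i⟩))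
    (ht : ∀ i, IsPairSplitting (f.app (D.obj ⟨i⟩)) (g.app (D.obj ⟨i⟩)) (t i)) :
    ∃ tc : N.obj c.pt → M.obj c.pt, IsPairSplitting (f.app c.pt) (g.app c.pt) tc ∧
      ∀ i n, M.map (c.π.app ⟨i⟩) (tc n) = t i (N.map (c.π.app ⟨i⟩) n) := by
  choose tc htc using fun (n : N.obj c.pt) =>
    (hM.bijective_map_π hc).2 fun i => t i (N.map (c.π.app ⟨i⟩) n)
  replace htc : ∀ n i, M.map (c.π.app ⟨i⟩) (tc n) = t i (N.map (c.π.app ⟨i⟩) n) :=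
    fun n i => congrFun (htc n) i
  have hf : ∀ i x, N.map (c.π.app ⟨i⟩) (f.app c.pt x) = f.app _ (M.map (c.π.app ⟨i⟩) x) :=
    fun i x => (NatTrans.naturality_apply f _ x).symm
  have hg : ∀ i x, N.map (c.π.app ⟨i⟩) (g.app c.pt x) = g.app _ (M.map (c.π.app ⟨i⟩) x) :=
    fun i x => (NatTrans.naturality_apply g _ x).symm
  refine ⟨tc, ⟨fun n => (hN.bijective_map_π hc).1 (funext fun i => ?_),
    fun a => (hN.bijective_map_π hc).1 (funext fun i => ?_)⟩, fun i n => htc n i⟩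
  · simp only [hg, htc]
    exact (ht i).rightInverse _
  · simp only [hf, hg, htc]
    exact (ht i).coequalizes _

theorem exists_isPairSplitting_app (hM : IsLawvereModel M) (hN : IsLawvereModel N)
    (f g : M ⟶ N) {X : L} (hX : IsPowerGenerator X)
    (hsplit : ∃ t, IsPairSplitting (f.app X) (g.app X) t) (A : L) :
    ∃ t, IsPairSplitting (f.app A) (g.app A) t := by
  obtain ⟨J, p, ⟨hc⟩⟩ := hX A
  obtain ⟨t, ht⟩ := hsplit
  obtain ⟨tA, htA, -⟩ := exists_isPairSplitting_of_isLimit hM hN f g hc (fun _ => t) fun _ => ht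
  exact ⟨tA, htA⟩

end Splitting

theorem isLawvereModel_colimit {K : WalkingParallelPair ⥤ (L ⥤ Type u)}
    (hM : IsLawvereModel (K.obj .zero)) (hN : IsLawvereModel (K.obj .one))
    (hsplit : ∀ A, ∃ t, IsPairSplitting ((K.map .left).app A) ((K.map .right).app A) t) :
    IsLawvereModel (colimit K) := by
  refine IsLawvereModel.of_bijective_map_π fun I D c hc => ?_
  let q := colimit.ι K .one
  have hcol (A : L) : IsColimit (((evaluation L (Type u)).obj A).mapCocone (colimit.cocone K)) :=
    isColimitOfPreserves _ (colimit.isColimit K)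
  have hq_surj (A : L) : Function.Surjective (q.app A) :=
    Types.surjective_ι_app_one_of_isColimit (hcol A)
  have hq_eq_iff {A : L} {t : (K.obj .one).obj A → (K.obj .zero).obj A}
      (ht : IsPairSplitting ((K.map .left).app A) ((K.map .right).app A) t) (n n') :
      q.app A n = q.app A n' ↔ (K.map .left).app A (t n) = (K.map .left).app A (t n') :=
    IsPairSplitting.ι_app_one_eq_iff (hcol A) ht n n'
  have hq (i : I) (n) : (colimit K).map (c.π.app ⟨i⟩) (q.app c.pt n) =
      q.app (D.obj ⟨i⟩) ((K.obj .one).map (c.π.app ⟨i⟩) n) :=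
    (NatTrans.naturality_apply q _ n).symm
  have hf (i : I) (m) : (K.obj .one).map (c.π.app ⟨i⟩) ((K.map .left).app c.pt m) =
      (K.map .left).app (D.obj ⟨i⟩) ((K.obj .zero).map (c.π.app ⟨i⟩) m) :=
    (NatTrans.naturality_apply (K.map .left) _ m).symm
  choose t ht using hsplit
  obtain ⟨tc, htc, htc_π⟩ := exists_isPairSplitting_of_isLimit hM hN (K.map .left) (K.map .right)
    hc (fun i => t _) fun i => ht _
  constructor
  · intro x y hxy
    obtain ⟨n, rfl⟩ := hq_surj c.pt x
    obtain ⟨n', rfl⟩ := hq_surj c.pt y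
    refine (hq_eq_iff htc n n').2 ((hN.bijective_map_π hc).1 (funext fun i => ?_))
    have hi := congrFun hxy i
    dsimp only at hi ⊢
    rw [hq, hq, hq_eq_iff (ht _)] at hi
    rw [hf, hf, htc_π, htc_π]
    exact hi
  · intro v
    choose n hn using fun i => hq_surj (D.obj ⟨i⟩) (v i)
    obtain ⟨m, hm⟩ := (hN.bijective_map_π hc).2 n
    refine ⟨q.app c.pt m, funext fun i => ?_⟩
    dsimp only
    rw [hq, ← hn i]
    exact congrArg (q.app _) (congrFun hm i)

section EvalModel

variable {X : L}

theorem evalModel_faithful (hX : IsPowerGenerator X) : (evalModel L X).Faithful where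
  map_injective {M N} α β h := by
    ext A x
    obtain ⟨J, p, ⟨hc⟩⟩ := hX A
    refine (IsLawvereModel.bijective_map_π N.2 hc).1 (funext fun j => ?_)
    change N.obj.map (p j) (α.hom.app A x) = N.obj.map (p j) (β.hom.app A x)
    rw [← NatTrans.naturality_apply, ← NatTrans.naturality_apply]
    exact ConcreteCategory.congr_hom h _

theorem evalModel_reflectsIsomorphisms (hX : IsPowerGenerator X) :
    (evalModel L X).ReflectsIsomorphisms where
  reflects {M N} α hα := by
    have hαX : Function.Bijective (α.hom.app X) := (isIso_iff_bijective _).1 hα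
    have (A : L) : IsIso (α.hom.app A) := by
      obtain ⟨J, p, ⟨hc⟩⟩ := hX A
      rw [isIso_iff_bijective, ← (IsLawvereModel.bijective_map_π N.2 hc).of_comp_iff']
      have hcomm : (fun y (j : J) => N.obj.map (p j) y) ∘ α.hom.app A =
          Pi.map (fun _ => α.hom.app X) ∘ fun x (j : J) => M.obj.map (p j) x := by
        funext x j
        exact (NatTrans.naturality_apply α.hom (p j) x).symm
      exact hcomm ▸ (Function.Bijective.piMap fun _ => hαX).comp
        (IsLawvereModel.bijective_map_π M.2 hc)
    have : IsIso ((ObjectProperty.ι _).map α) := NatIso.isIso_of_isIso_app α.hom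
    exact isIso_of_reflects_iso α (ObjectProperty.ι _)

theorem isLawvereModel_colimit_of_isSplitPair (hX : IsPowerGenerator X) {M N : LawvereModel L}
    (f g : M ⟶ N) [(evalModel L X).IsSplitPair f g] :
    IsLawvereModel (colimit (parallelPair f g ⋙ ObjectProperty.ι _)) := by
  have hsplit := IsPairSplitting.of_isSplitCoequalizer
    (HasSplitCoequalizer.isSplitCoequalizer ((evalModel L X).map f) ((evalModel L X).map g))
  exact isLawvereModel_colimit M.2 N.2
    (exists_isPairSplitting_app M.2 N.2 f.hom g.hom hX ⟨_, hsplit⟩)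

noncomputable abbrev createsColimitOfIsSplitPair (hX : IsPowerGenerator X) {M N : LawvereModel L}
    (f g : M ⟶ N) [(evalModel L X).IsSplitPair f g] :
    CreatesColimit (parallelPair f g) (evalModel L X) :=
  have := evalModel_reflectsIsomorphisms hX
  have := createsColimitFullSubcategoryInclusion (parallelPair f g)
    (isLawvereModel_colimit_of_isSplitPair hX f g)
  have := hasColimit_of_created (parallelPair f g) (ObjectProperty.ι _)
  have : PreservesColimit (parallelPair f g) (evalModel L X) :=
    inferInstanceAs (PreservesColimit _ (ObjectProperty.ι _ ⋙ (evaluation L (Type u)).obj X))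
  createsColimitOfReflectsIsomorphismsOfPreserves

end EvalModel

section FreeModel

variable (X : L)

noncomputable def freeModel (I : Type u) [HasProduct fun _ : I => X] : LawvereModel L :=
  ⟨coyoneda.obj (Opposite.op (∏ᶜ fun _ : I => X)), fun _ => ⟨inferInstance⟩⟩

noncomputable def freeModelHomEquiv (I : Type u) [HasProduct fun _ : I => X] (M : LawvereModel L) :
    (freeModel X I ⟶ M) ≃ (I ⟶ (evalModel L X).obj M) :=
  InducedCategory.homEquiv.trans <| coyonedaEquiv.trans <|
    (Equiv.ofBijective _ (IsLawvereModel.bijective_map_π M.2 (limit.isLimit _)) :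
      M.obj.obj (∏ᶜ fun _ : I => X) ≃ (I → M.obj.obj X)).trans TypeCat.homEquiv.symm

theorem freeModelHomEquiv_naturality (I : Type u) [HasProduct fun _ : I => X]
    {M M' : LawvereModel L} (α : M ⟶ M') (h : freeModel X I ⟶ M) :
    freeModelHomEquiv X I M' (h ≫ α) = freeModelHomEquiv X I M h ≫ (evalModel L X).map α := by
  ext i
  exact (NatTrans.naturality_apply α.hom _ (h.hom.app _ (𝟙 _))).symm

noncomputable def freeModelAdjunction [∀ I : Type u, HasProduct fun _ : I => X] :
    Adjunction.leftAdjointOfEquiv (fun I M => freeModelHomEquiv X I M)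
      (fun I _ _ α h => freeModelHomEquiv_naturality X I α h) ⊣ evalModel L X :=
  Adjunction.adjunctionOfEquivLeft _ _

end FreeModel

end LawvereModels

theorem stmt16 {L : Type v} [Category.{u} L] (X : L)
    (hpow : ∀ I : Type u, HasProduct fun _ : I => X)
    (hgen : ∀ A : L, ∃ I : Type u,
      letI := hpow I; Nonempty (A ≅ ∏ᶜ fun _ : I => X)) :
    Nonempty (MonadicRightAdjoint (evalModel L X)) := by
  have hX := isPowerGenerator_of_iso_pi X hpow hgen
  have := evalModel_faithful hX
  have : LocallySmall.{u} (LawvereModel L) := locallySmall_of_faithful (evalModel L X)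
  exact ⟨Monad.monadicOfCreatesGSplitCoequalizersOfLocallySmall (freeModelAdjunction X)
    fun _ _ f g _ => createsColimitOfIsSplitPair hX f g⟩
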